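/- Let (L,G) be a generator enriched lattice and let (L̂,Ĝ) be obtained by adjoining a new maximum element m > 1̂_L with Ĝ = G ∪ {m}. Then M(L̂,Ĝ) is isomorphic to the pyramid pyr(M(L,G)) = M(L,G) × B₁. -/

import Mathlib

open Finset

/-- A generator-enriched lattice datum inside an ambient lattice `L`:
a minimal element `z` together with a finite generating set of elements
strictly above `z`. The underlying set of elements consists of all joins
of `z` with subsets of the generating set. -/
structure GEL (L : Type*) [Lattice L] [DecidableEq L] where
  z : L
  gens : Finset L
  lt_gens : ∀ g ∈ gens, z < g

namespace GEL

variable {L K : Type*} [Lattice L] [OrderBot L] [DecidableEq L]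

/-- The underlying set of elements of a generator enriched lattice. -/
def carrier (M : GEL L) : Finset L :=
  M.gens.powerset.image fun X => X.sup id ⊔ M.z

/-- Deletion of a set of generators. -/
def delete (M : GEL L) (I : Finset L) : GEL L :=
  ⟨M.z, M.gens \ I, fun g hg => M.lt_gens g (Finset.mem_sdiff.mp hg).1⟩

/-- Restriction to a set of generators. -/
def restrict (M : GEL L) (I : Finset L) : GEL L :=
  M.delete (M.gens \ I)

/-- Contraction by a set of generators. -/
def contract (M : GEL L) (I : Finset L) : GEL L :=
  ⟨I.sup id ⊔ M.z,
   (M.gens.image fun g => g ⊔ (I.sup id ⊔ M.z)).erase (I.sup id ⊔ M.z),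
   fun g hg => by
     obtain ⟨hne, hg'⟩ := Finset.mem_erase.mp hg
     obtain ⟨h, -, rfl⟩ := Finset.mem_image.mp hg'
     exact lt_of_le_of_ne le_sup_right (Ne.symm hne)⟩

open Classical in
/-- Contraction by an element: contract by all generators below it. -/
noncomputable def contractEl (M : GEL L) (ℓ : L) : GEL L :=
  M.contract (M.gens.filter fun g => g ≤ ℓ)

/-- A single deletion or contraction step. -/
def Step (M N : GEL L) : Prop :=
  ∃ I ⊆ M.gens, N = M.delete I ∨ N = M.contract I

/-- `Minor M N` : `N` is a minor of `M`, i.e. obtained from `M` by a finite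
sequence of deletions and contractions. -/
def Minor (M N : GEL L) : Prop :=
  Relation.ReflTransGen Step M N

/-- The generator enriched lattice on a lattice with `⊥`, with the given generating set. -/
def ofGens (G : Finset L) (hG : ∀ g ∈ G, (⊥ : L) < g) : GEL L :=
  ⟨⊥, G, hG⟩

/-- The underlying type of the minor poset of `T`: all minors of `T`
together with an adjoined minimum `none`. -/
abbrev MP (T : GEL L) := Option {M : GEL L // T.Minor M}

/-- The order relation of the minor poset. -/
def mple (T : GEL L) : MP T → MP T → Prop
  | none, _ => True
  | some _, none => False
  | some A, some B => B.1.Minor A.1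

/-- The rank function of the minor poset. -/
def mrank (T : GEL L) : MP T → ℕ
  | none => 0
  | some A => A.1.gens.card + 1

/-- A parallel: an element `ℓ` and distinct generators `g, h` with
`g ⊔ ℓ = h ⊔ ℓ ≠ ℓ`. -/
def HasParallel (M : GEL L) : Prop :=
  ∃ ℓ ∈ M.carrier, ∃ g ∈ M.gens, ∃ h ∈ M.gens,
    g ≠ h ∧ g ⊔ ℓ = h ⊔ ℓ ∧ g ⊔ ℓ ≠ ℓ

/-- Isomorphism of generator enriched lattices: a join-preserving bijection of the
underlying sets carrying the generating set onto the generating set. -/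
def GIso [Lattice K] [OrderBot K] [DecidableEq K] (M : GEL L) (N : GEL K) : Prop :=
  ∃ f : L → K, Set.BijOn f ↑M.carrier ↑N.carrier ∧
    (∀ a ∈ M.carrier, ∀ b ∈ M.carrier, f (a ⊔ b) = f a ⊔ f b) ∧
    f '' ↑M.gens = ↑N.gens

open Classical in
/-- The image generator enriched lattice `⟨f(I) | f(z)⟩` of a strong map. -/
noncomputable def map [Lattice K] [DecidableEq K] (f : L → K) (M : GEL L) : GEL K :=
  ⟨f M.z, (M.gens.image f).filter fun y => f M.z < y,
   fun g hg => (Finset.mem_filter.mp hg).2⟩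

/-- `T` lifts join irreducibles: for every `ℓ` and generator `g` with `g ≰ ℓ`,
the element `g ⊔ ℓ` is join irreducible in the interval `[ℓ, ⊤]`. -/
def LiftsJI (T : GEL L) : Prop :=
  ∀ ℓ : L, ∀ g ∈ T.gens, ¬ g ≤ ℓ →
    ∀ a b : L, ℓ ≤ a → ℓ ≤ b → g ⊔ ℓ = a ⊔ b → g ⊔ ℓ = a ∨ g ⊔ ℓ = b

end GEL

/-- The generator enriched lattice `(L̂, Ĝ)` obtained from `(L,G)` by adjoining a
new maximum element `m = ⊤` and adding it as a generator. -/
def GEL.hat {L : Type*} [Lattice L] [DecidableEq L] (T : GEL L) :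
    GEL (WithTop L) :=
  ⟨(T.z : WithTop L),
   T.gens.image (WithTop.some : L → WithTop L) ∪ {(⊤ : WithTop L)},
   by
     intro g hg
     simp only [Finset.mem_union, Finset.mem_image, Finset.mem_singleton] at hg
     rcases hg with ⟨a, ha, rfl⟩ | rfl
     · exact_mod_cast T.lt_gens a ha
     · exact WithTop.coe_lt_top _⟩


set_option linter.unusedSectionVars false

namespace GEL

variable {L : Type*} [Lattice L] [OrderBot L] [DecidableEq L]

lemma ext' {M N : GEL L} (hz : M.z = N.z) (hg : M.gens = N.gens) : M = N := by
  cases M; cases N; cases hz; cases hg; rfl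

/-- The coe-image of a generator enriched lattice in `WithTop L`. -/
def coeG (M : GEL L) : GEL (WithTop L) :=
  ⟨(M.z : WithTop L), M.gens.image WithTop.some, by
    intro g hg
    obtain ⟨a, ha, rfl⟩ := Finset.mem_image.mp hg
    exact_mod_cast M.lt_gens a ha⟩

/-- The trivial generator enriched lattice `⟨⊤, ∅⟩` in `WithTop L`. -/
def topG (L : Type*) [Lattice L] [DecidableEq L] : GEL (WithTop L) :=
  ⟨⊤, ∅, by simp⟩

lemma sup_image_coe (I : Finset L) :
    (I.image (WithTop.some : L → WithTop L)).sup id = ((I.sup id : L) : WithTop L) := by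
  rw [Finset.sup_image]
  induction I using Finset.induction_on with
  | empty => simp
  | insert _ _ ha ih =>
      rw [Finset.sup_insert, Finset.sup_insert, ih]
      simp [WithTop.coe_sup]

lemma top_not_mem_image (G : Finset L) : (⊤ : WithTop L) ∉ G.image WithTop.some := by
  simp

lemma coeG_delete (M : GEL L) (I : Finset L) :
    coeG (M.delete I) = (coeG M).delete (I.image WithTop.some) := by
  refine ext' rfl ?_
  show (M.gens \ I).image WithTop.some
      = M.gens.image WithTop.some \ I.image WithTop.some
  exact Finset.image_sdiff _ _ WithTop.coe_injective

lemma coeG_contract (M : GEL L) (I : Finset L) :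
    coeG (M.contract I) = (coeG M).contract (I.image WithTop.some) := by
  have hw : ((I.image (WithTop.some : L → WithTop L)).sup id ⊔ ((M.z : L) : WithTop L))
      = ((I.sup id ⊔ M.z : L) : WithTop L) := by
    rw [sup_image_coe, WithTop.coe_sup]
  refine ext' hw.symm ?_
  show ((M.gens.image fun g => g ⊔ (I.sup id ⊔ M.z)).erase (I.sup id ⊔ M.z)).image WithTop.some
      = ((M.gens.image WithTop.some).image
          fun g => g ⊔ ((I.image WithTop.some).sup id ⊔ (M.z : WithTop L))).erase
          ((I.image WithTop.some).sup id ⊔ (M.z : WithTop L))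
  rw [hw, Finset.image_erase WithTop.coe_injective, Finset.image_image, Finset.image_image]
  congr 1

lemma hat_delete (M : GEL L) (I : Finset L) :
    M.hat.delete (I.image WithTop.some) = (M.delete I).hat := by
  refine ext' rfl ?_
  show (M.gens.image WithTop.some ∪ {⊤}) \ I.image WithTop.some
      = (M.gens \ I).image WithTop.some ∪ {⊤}
  rw [Finset.union_sdiff_distrib, Finset.image_sdiff _ _ WithTop.coe_injective]
  congr 1
  ext x
  simp only [Finset.mem_sdiff, Finset.mem_singleton]
  constructor
  · rintro ⟨hx, -⟩; exact hx
  · rintro rfl; exact ⟨rfl, top_not_mem_image I⟩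

lemma hat_contract (M : GEL L) (I : Finset L) :
    M.hat.contract (I.image WithTop.some) = (M.contract I).hat := by
  have hw : ((I.image (WithTop.some : L → WithTop L)).sup id ⊔ ((M.z : L) : WithTop L))
      = ((I.sup id ⊔ M.z : L) : WithTop L) := by
    rw [sup_image_coe, WithTop.coe_sup]
  refine ext' hw ?_
  show (((M.gens.image WithTop.some ∪ {⊤}).image
          fun g => g ⊔ ((I.image WithTop.some).sup id ⊔ (M.z : WithTop L))).erase
          ((I.image WithTop.some).sup id ⊔ (M.z : WithTop L)))
      = ((M.gens.image fun g => g ⊔ (I.sup id ⊔ M.z)).erase (I.sup id ⊔ M.z)).image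
          WithTop.some ∪ {⊤}
  rw [hw, Finset.image_union, Finset.image_image, Finset.erase_union_distrib,
    Finset.image_erase WithTop.coe_injective, Finset.image_image]
  congr 1

lemma contract_top (N : GEL (WithTop L)) {I : Finset (WithTop L)} (h : (⊤ : WithTop L) ∈ I) :
    N.contract I = topG L := by
  have hz : I.sup id ⊔ N.z = ⊤ :=
    top_unique (le_trans (Finset.le_sup (f := id) h) le_sup_left)
  refine ext' hz ?_
  show ((N.gens.image fun g => g ⊔ (I.sup id ⊔ N.z)).erase (I.sup id ⊔ N.z)) = ∅
  rw [hz]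
  ext x
  simp only [Finset.mem_erase, Finset.mem_image, Finset.notMem_empty, iff_false, not_and]
  rintro hx ⟨g, hg, rfl⟩
  exact hx (sup_top_eq g)

lemma delete_empty (M : GEL L) : M.delete ∅ = M :=
  ext' rfl (by simp [delete])

lemma step_topG {N : GEL (WithTop L)} (h : Step (topG L) N) : N = topG L := by
  obtain ⟨I, hI, rfl | rfl⟩ := h
  · refine ext' rfl ?_
    show (∅ : Finset (WithTop L)) \ I = ∅
    simp
  · refine ext' ?_ ?_
    · show I.sup id ⊔ (⊤ : WithTop L) = ⊤
      exact sup_top_eq _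
    · show (((∅ : Finset (WithTop L)).image _).erase _) = ∅
      simp

lemma exists_preimage {G : Finset L} {I : Finset (WithTop L)}
    (hI : I ⊆ G.image WithTop.some ∪ {⊤}) :
    ∃ I₀ ⊆ G, I.erase ⊤ = I₀.image WithTop.some := by
  refine ⟨G.filter (fun a => (a : WithTop L) ∈ I), Finset.filter_subset _ _, ?_⟩
  ext x
  simp only [Finset.mem_erase, Finset.mem_image, Finset.mem_filter]
  constructor
  · rintro ⟨hx, hxI⟩
    rcases Finset.mem_union.mp (hI hxI) with h | h
    · obtain ⟨a, ha, rfl⟩ := Finset.mem_image.mp h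
      exact ⟨a, ⟨ha, hxI⟩, rfl⟩
    · exact absurd (Finset.mem_singleton.mp h) hx
  · rintro ⟨a, ⟨ha, haI⟩, rfl⟩
    exact ⟨WithTop.coe_ne_top, haI⟩

lemma hat_delete_top (M : GEL L) (I₀ : Finset L) :
    M.hat.delete (I₀.image WithTop.some ∪ {⊤}) = coeG (M.delete I₀) := by
  refine ext' rfl ?_
  show (M.gens.image WithTop.some ∪ {⊤}) \ (I₀.image WithTop.some ∪ {⊤})
      = (M.gens \ I₀).image WithTop.some
  rw [Finset.image_sdiff _ _ WithTop.coe_injective]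
  ext x
  by_cases hx : x = ⊤ <;>
    simp [hx, Finset.mem_sdiff, Finset.mem_union]

lemma step_coeG {M : GEL L} {N : GEL (WithTop L)} (h : Step (coeG M) N) :
    ∃ M', Step M M' ∧ N = coeG M' := by
  obtain ⟨I, hI, hN⟩ := h
  have hI' : I ⊆ M.gens.image WithTop.some ∪ {⊤} :=
    hI.trans Finset.subset_union_left
  obtain ⟨I₀, hI₀, hIe⟩ := exists_preimage hI'
  have htop : (⊤ : WithTop L) ∉ I := fun hc => top_not_mem_image M.gens (hI hc)
  have hIeq : I = I₀.image WithTop.some :=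
    (Finset.erase_eq_self.mpr htop).symm.trans hIe
  rcases hN with rfl | rfl
  · exact ⟨M.delete I₀, ⟨I₀, hI₀, Or.inl rfl⟩, by rw [hIeq, ← coeG_delete]⟩
  · exact ⟨M.contract I₀, ⟨I₀, hI₀, Or.inr rfl⟩, by rw [hIeq, ← coeG_contract]⟩

lemma step_hat {M : GEL L} {N : GEL (WithTop L)} (h : Step M.hat N) :
    (∃ M', Step M M' ∧ (N = M'.hat ∨ N = coeG M')) ∨ N = topG L := by
  obtain ⟨I, hI, hN⟩ := h
  have hI' : I ⊆ M.gens.image WithTop.some ∪ {⊤} := hI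
  obtain ⟨I₀, hI₀, hIe⟩ := exists_preimage hI'
  by_cases htop : (⊤ : WithTop L) ∈ I
  · rcases hN with rfl | rfl
    · left
      refine ⟨M.delete I₀, ⟨I₀, hI₀, Or.inl rfl⟩, Or.inr ?_⟩
      have hIeq : I = I₀.image WithTop.some ∪ {⊤} := by
        rw [← hIe, Finset.union_comm, ← Finset.insert_eq, Finset.insert_erase htop]
      rw [hIeq, hat_delete_top M I₀]
    · exact Or.inr (contract_top _ htop)
  · have hIeq : I = I₀.image WithTop.some :=
      (Finset.erase_eq_self.mpr htop).symm.trans hIe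
    rcases hN with rfl | rfl
    · exact Or.inl ⟨M.delete I₀, ⟨I₀, hI₀, Or.inl rfl⟩, Or.inl (by rw [hIeq, hat_delete])⟩
    · exact Or.inl ⟨M.contract I₀, ⟨I₀, hI₀, Or.inr rfl⟩, Or.inl (by rw [hIeq, hat_contract])⟩

lemma step_coeG_lift {M M' : GEL L} (h : Step M M') : Step (coeG M) (coeG M') := by
  obtain ⟨I, hI, rfl | rfl⟩ := h
  · exact ⟨I.image _, Finset.image_subset_image hI, Or.inl (coeG_delete M I)⟩
  · exact ⟨I.image _, Finset.image_subset_image hI, Or.inr (coeG_contract M I)⟩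

lemma step_hat_lift {M M' : GEL L} (h : Step M M') : Step M.hat M'.hat := by
  obtain ⟨I, hI, rfl | rfl⟩ := h
  · exact ⟨I.image _, (Finset.image_subset_image hI).trans Finset.subset_union_left,
      Or.inl (hat_delete M I).symm⟩
  · exact ⟨I.image _, (Finset.image_subset_image hI).trans Finset.subset_union_left,
      Or.inr (hat_contract M I).symm⟩

lemma minor_coeG_lift {A B : GEL L} (h : Minor B A) : Minor (coeG B) (coeG A) :=
  Relation.ReflTransGen.lift coeG (fun _ _ hs => step_coeG_lift hs) _ _ h

lemma minor_hat_lift {A B : GEL L} (h : Minor B A) : Minor B.hat A.hat :=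
  Relation.ReflTransGen.lift hat (fun _ _ hs => step_hat_lift hs) _ _ h

lemma top_mem_hat_gens (M : GEL L) : (⊤ : WithTop L) ∈ M.hat.gens :=
  Finset.mem_union_right _ (Finset.mem_singleton_self _)

lemma step_hat_coe (M : GEL L) : Step M.hat (coeG M) := by
  refine ⟨{⊤}, Finset.singleton_subset_iff.mpr (top_mem_hat_gens M), Or.inl ?_⟩
  have h := hat_delete_top M ∅
  rw [Finset.image_empty, Finset.empty_union, delete_empty] at h
  exact h.symm

lemma step_hat_top (M : GEL L) : Step M.hat (topG L) :=
  ⟨{⊤}, Finset.singleton_subset_iff.mpr (top_mem_hat_gens M),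
    Or.inr (contract_top _ (Finset.mem_singleton_self _)).symm⟩

lemma minor_coeG_classify {B : GEL L} {N : GEL (WithTop L)} (h : Minor (coeG B) N) :
    ∃ M', Minor B M' ∧ N = coeG M' := by
  induction h with
  | refl => exact ⟨B, Relation.ReflTransGen.refl, rfl⟩
  | tail _ hstep ih =>
      obtain ⟨M', hM', rfl⟩ := ih
      obtain ⟨M'', h1, rfl⟩ := step_coeG hstep
      exact ⟨M'', hM'.tail h1, rfl⟩

lemma minor_topG_classify {N : GEL (WithTop L)} (h : Minor (topG L) N) : N = topG L := by
  induction h with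
  | refl => rfl
  | tail _ hstep ih => subst ih; exact step_topG hstep

lemma minor_hat_classify {B : GEL L} {N : GEL (WithTop L)} (h : Minor B.hat N) :
    (∃ M', Minor B M' ∧ (N = M'.hat ∨ N = coeG M')) ∨ N = topG L := by
  induction h with
  | refl => exact Or.inl ⟨B, Relation.ReflTransGen.refl, Or.inl rfl⟩
  | tail _ hstep ih =>
      rcases ih with ⟨M', hM', rfl | rfl⟩ | rfl
      · rcases step_hat hstep with ⟨M'', h1, h2⟩ | h3
        · exact Or.inl ⟨M'', hM'.tail h1, h2⟩
        · exact Or.inr h3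
      · obtain ⟨M'', h1, rfl⟩ := step_coeG hstep
        exact Or.inl ⟨M'', hM'.tail h1, Or.inr rfl⟩
      · exact Or.inr (step_topG hstep)

lemma hat_ne_coeG (A B : GEL L) : A.hat ≠ coeG B := by
  intro h
  have := top_mem_hat_gens A
  rw [h] at this
  exact top_not_mem_image B.gens this

lemma hat_ne_topG (A : GEL L) : A.hat ≠ topG L := by
  intro h
  have : (A.z : WithTop L) = (⊤ : WithTop L) := congrArg z h
  exact WithTop.coe_ne_top this

lemma coeG_ne_topG (A : GEL L) : coeG A ≠ topG L := by
  intro h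
  have : (A.z : WithTop L) = (⊤ : WithTop L) := congrArg z h
  exact WithTop.coe_ne_top this

lemma coeG_inj {A B : GEL L} (h : coeG A = coeG B) : A = B := by
  refine ext' ?_ ?_
  · exact WithTop.coe_injective (congrArg z h)
  · exact Finset.image_injective WithTop.coe_injective (congrArg gens h)

lemma hat_inj {A B : GEL L} (h : A.hat = B.hat) : A = B := by
  refine ext' (WithTop.coe_injective (congrArg z h)) ?_
  have hg : A.gens.image WithTop.some ∪ {⊤} = B.gens.image WithTop.some ∪ {⊤} :=
    congrArg gens h
  have hA := Finset.union_sdiff_cancel_right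
    (Finset.disjoint_singleton_right.mpr (top_not_mem_image A.gens))
  have hB := Finset.union_sdiff_cancel_right
    (Finset.disjoint_singleton_right.mpr (top_not_mem_image B.gens))
  exact Finset.image_injective WithTop.coe_injective (by rw [← hA, ← hB, hg])

@[simp] lemma minor_refl (M : GEL L) : Minor M M := Relation.ReflTransGen.refl

@[simp] lemma minor_hat_iff {A B : GEL L} : Minor B.hat A.hat ↔ Minor B A := by
  constructor
  · intro h
    rcases minor_hat_classify h with ⟨M', hM', heq | heq⟩ | heq
    · rwa [hat_inj heq]
    · exact absurd heq (hat_ne_coeG _ _)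
    · exact absurd heq (hat_ne_topG _)
  · exact minor_hat_lift

@[simp] lemma minor_hat_coe_iff {A B : GEL L} : Minor B.hat (coeG A) ↔ Minor B A := by
  constructor
  · intro h
    rcases minor_hat_classify h with ⟨M', hM', heq | heq⟩ | heq
    · exact absurd heq.symm (hat_ne_coeG _ _)
    · rwa [coeG_inj heq]
    · exact absurd heq (coeG_ne_topG _)
  · intro h
    exact (Relation.ReflTransGen.single (step_hat_coe B)).trans (minor_coeG_lift h)

@[simp] lemma minor_coe_iff {A B : GEL L} : Minor (coeG B) (coeG A) ↔ Minor B A := by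
  constructor
  · intro h
    obtain ⟨M', hM', heq⟩ := minor_coeG_classify h
    rwa [coeG_inj heq]
  · exact minor_coeG_lift

@[simp] lemma minor_hat_topG (B : GEL L) : Minor B.hat (topG L) :=
  Relation.ReflTransGen.single (step_hat_top B)

@[simp] lemma not_minor_coe_hat (A B : GEL L) : ¬ Minor (coeG B) A.hat := by
  intro h
  obtain ⟨M', -, heq⟩ := minor_coeG_classify h
  exact hat_ne_coeG _ _ heq

@[simp] lemma not_minor_coe_topG (B : GEL L) : ¬ Minor (coeG B) (topG L) := by
  intro h
  obtain ⟨M', -, heq⟩ := minor_coeG_classify h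
  exact coeG_ne_topG _ heq.symm

@[simp] lemma not_minor_top_hat (A : GEL L) : ¬ Minor (topG L) A.hat := fun h =>
  hat_ne_topG A (minor_topG_classify h)

@[simp] lemma not_minor_top_coe (A : GEL L) : ¬ Minor (topG L) (coeG A) := fun h =>
  coeG_ne_topG A (minor_topG_classify h)

/-- The explicit bijection from the pyramid to the minor poset of `T.hat`. -/
def toHat (T : GEL L) : GEL.MP T × Bool → GEL.MP T.hat
  | (none, false) => none
  | (none, true) => some ⟨topG L, minor_hat_topG T⟩
  | (some A, false) => some ⟨coeG A.1, minor_hat_coe_iff.mpr A.2⟩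
  | (some A, true) => some ⟨A.1.hat, minor_hat_iff.mpr A.2⟩

lemma toHat_injective (T : GEL L) : Function.Injective (toHat T) := by
  rintro ⟨a, ba⟩ ⟨c, bc⟩ h
  rcases a with _ | A <;> rcases c with _ | C <;> cases ba <;> cases bc <;>
    simp only [toHat, Option.some.injEq, Subtype.mk.injEq, reduceCtorEq] at h <;>
    first
      | rfl
      | exact absurd h (coeG_ne_topG _)
      | exact absurd h.symm (coeG_ne_topG _)
      | exact absurd h (hat_ne_topG _)
      | exact absurd h.symm (hat_ne_topG _)
      | exact absurd h (hat_ne_coeG _ _)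
      | exact absurd h.symm (hat_ne_coeG _ _)
      | (simp only [Prod.mk.injEq, Option.some.injEq, and_true]
         exact Subtype.ext (coeG_inj h))
      | (simp only [Prod.mk.injEq, Option.some.injEq, and_true]
         exact Subtype.ext (hat_inj h))

lemma toHat_surjective (T : GEL L) : Function.Surjective (toHat T) := by
  rintro (_ | ⟨N, hN⟩)
  · exact ⟨(none, false), rfl⟩
  · rcases minor_hat_classify hN with ⟨M', hM', rfl | rfl⟩ | rfl
    · exact ⟨(some ⟨M', hM'⟩, true), rfl⟩
    · exact ⟨(some ⟨M', hM'⟩, false), rfl⟩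
    · exact ⟨(none, true), rfl⟩

lemma toHat_mple (T : GEL L) (p q : GEL.MP T × Bool) :
    mple T.hat (toHat T p) (toHat T q) ↔ mple T p.1 q.1 ∧ p.2 ≤ q.2 := by
  obtain ⟨a, ba⟩ := p
  obtain ⟨c, bc⟩ := q
  rcases a with _ | A <;> rcases c with _ | C <;> cases ba <;> cases bc <;>
    simp [toHat, mple]

end GEL

/-- Adjoining a new maximum element as a generator turns the minor poset into
the pyramid: `M(L̂,Ĝ) ≅ pyr(M(L,G)) = M(L,G) × B₁`. -/
theorem minorPoset_hat_iso_pyramid {L : Type*} [Lattice L] [OrderBot L]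
    [DecidableEq L] (T : GEL L) (hcar : ∀ ℓ : L, ℓ ∈ T.carrier) :
    ∃ e : GEL.MP T.hat ≃ GEL.MP T × Bool,
      ∀ a b : GEL.MP T.hat,
        GEL.mple T.hat a b ↔
          GEL.mple T (e a).1 (e b).1 ∧ (e a).2 ≤ (e b).2 := by
  have hbij : Function.Bijective (GEL.toHat T) :=
    ⟨GEL.toHat_injective T, GEL.toHat_surjective T⟩
  refine ⟨(Equiv.ofBijective _ hbij).symm, ?_⟩
  intro a b
  obtain ⟨p, rfl⟩ := GEL.toHat_surjective T a
  obtain ⟨q, rfl⟩ := GEL.toHat_surjective T b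
  have h2 : ∀ r, (Equiv.ofBijective _ hbij).symm (GEL.toHat T r) = r := fun r =>
    Equiv.symm_apply_apply _ r
  rw [h2, h2]
  exact GEL.toHat_mple T p q
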